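/- Let n ≥ 2, let s : Fin n → ℝ be injective, let ỹ : Fin n → ℝ be a bijection onto {1, 2, …, n}, let σ > 0, and define r̂_i = 1 + #{j ≠ i : s_i < s_j} and ρ = 12·(Σ_{i=1}^{n} r̂_i ỹ_i − n·((n+1)/2)²)/(n(n² − 1)). Then 1 − ρ ≤ (12 / (n(n² − 1))) · Σ_{(i,j) : ỹ_i < ỹ_j} |r̂_j − r̂_i| · (ỹ_j − ỹ_i) · log₂(1 + exp(−σ(s_i − s_j))), where the sum is over all ordered pairs (i, j) with ỹ_i < ỹ_j. -/

import Mathlib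

/-!
Both `r̂` and `ỹ` are permutations of `1, …, n`, so `Σ r̂ᵢ² = Σ ỹᵢ²` and Spearman's formula
`1 - ρ = 6 Σ (r̂ᵢ - ỹᵢ)² / (n (n² - 1))` holds. Call `(i, j)` discordant if `r̂ⱼ < r̂ᵢ` and
`ỹᵢ < ỹⱼ`. Then `dᵢ = r̂ᵢ - ỹᵢ` is the number of discordant pairs `(i, ·)` minus the number of
discordant pairs `(·, i)`, and summing `dᵢ²` by parts gives `Σ dᵢ² = Σ_{(i,j) discordant} (dᵢ - dⱼ)`,
where `dᵢ - dⱼ = |r̂ⱼ - r̂ᵢ| + (ỹⱼ - ỹᵢ) ≤ 2 |r̂ⱼ - r̂ᵢ| (ỹⱼ - ỹᵢ)` because both gaps are at least `1`.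
On a discordant pair `sᵢ < sⱼ`, so the weight `log₂ (1 + exp (-σ (sᵢ - sⱼ)))` is at least `1`;
it is nonnegative on the remaining pairs.
-/

open Finset Function Real

section Rank

variable {ι α β : Type*} [Fintype ι] [LinearOrder α] [LinearOrder β]

def rankBelow (f : ι → α) (i : ι) : ℕ := #{j | f j < f i}

theorem rankBelow_lt_rankBelow {f : ι → α} {i j : ι} (h : f i < f j) :
    rankBelow f i < rankBelow f j :=
  card_lt_card <| (ssubset_iff_of_subset fun k hk => by
    simp only [mem_filter, mem_univ, true_and] at hk ⊢
    exact hk.trans h).2 ⟨i, by simpa using h, by simp⟩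

theorem cast_rankBelow_add_one_le {f : ι → α} {i j : ι} (h : f i < f j) :
    (rankBelow f i : ℝ) + 1 ≤ rankBelow f j := by
  exact_mod_cast rankBelow_lt_rankBelow h

theorem rankBelow_injective {f : ι → α} (hf : Injective f) : Injective (rankBelow f) :=
  fun _ _ h => hf <| le_antisymm
    (not_lt.1 fun hji => (rankBelow_lt_rankBelow hji).ne' h)
    (not_lt.1 fun hij => (rankBelow_lt_rankBelow hij).ne h)

theorem rankBelow_lt_card (f : ι → α) (i : ι) : rankBelow f i < Fintype.card ι :=
  (card_lt_card (filter_ssubset.2 ⟨i, mem_univ i, lt_irrefl (f i)⟩)).trans_eq card_univ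

theorem image_rankBelow {f : ι → α} (hf : Injective f) :
    univ.image (rankBelow f) = range (Fintype.card ι) :=
  eq_of_subset_of_card_le
    (fun k hk => by
      obtain ⟨i, -, rfl⟩ := mem_image.1 hk
      exact mem_range.2 (rankBelow_lt_card f i))
    (by rw [card_image_of_injective _ (rankBelow_injective hf), card_range, card_univ])

theorem sum_comp_rankBelow {M : Type*} [AddCommMonoid M] {f : ι → α} (hf : Injective f)
    (h : ℕ → M) : ∑ i, h (rankBelow f i) = ∑ k ∈ range (Fintype.card ι), h k := by
  rw [← image_rankBelow hf, sum_image fun i _ j _ hij => rankBelow_injective hf hij]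

theorem sum_range_add_one_sq (n : ℕ) :
    ∑ k ∈ range n, ((k : ℝ) + 1) ^ 2 = (n : ℝ) * (n + 1) * (2 * n + 1) / 6 := by
  induction n with
  | zero => simp
  | succ m ih => rw [sum_range_succ, ih]; push_cast; ring

theorem sum_rankBelow_add_one_sq {f : ι → α} (hf : Injective f) :
    ∑ i, ((rankBelow f i : ℝ) + 1) ^ 2
      = (Fintype.card ι : ℝ) * (Fintype.card ι + 1) * (2 * Fintype.card ι + 1) / 6 := by
  rw [sum_comp_rankBelow hf fun k => ((k : ℝ) + 1) ^ 2, sum_range_add_one_sq]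

theorem rankBelow_equivFin {n : ℕ} (e : ι ≃ Fin n) (i : ι) : rankBelow e i = e i := by
  have : ({j | e j < e i} : Finset ι) = (Iio (e i)).map e.symm.toEmbedding := by
    ext j
    simp [mem_map_equiv]
  rw [rankBelow, this, card_map, Fin.card_Iio]

theorem rankBelow_eq_card_add_card (f : ι → α) {g : ι → β} (hg : Injective g) (i : ι) :
    rankBelow f i = #{j | f j < f i ∧ g j < g i} + #{j | f j < f i ∧ g i < g j} := by
  classical
  rw [rankBelow, ← card_union_of_disjoint]
  · congr 1
    ext j
    simp only [mem_filter, mem_univ, true_and, mem_union, ← and_or_left]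
    refine ⟨fun h => ⟨h, (hg.ne (ne_of_apply_ne f h.ne)).lt_or_gt⟩, And.left⟩
  · exact disjoint_filter.2 fun j _ h h' => lt_asymm h.2 h'.2

theorem rankBelow_add_card_discordant {f : ι → α} {g : ι → β} (hf : Injective f)
    (hg : Injective g) (i : ι) :
    rankBelow f i + #{j | f i < f j ∧ g j < g i}
      = rankBelow g i + #{j | f j < f i ∧ g i < g j} := by
  rw [rankBelow_eq_card_add_card f hg, rankBelow_eq_card_add_card g hf]
  simp only [and_comm (a := g _ < g i)]
  omega

end Rank

theorem sum_mul_sum_sub_swap {ι R : Type*} [Fintype ι] [CommRing R] (A : ι → ι → R)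
    (u : ι → R) :
    ∑ i, u i * ∑ j, (A i j - A j i) = ∑ i, ∑ j, A i j * (u i - u j) := by
  simp only [mul_sum, mul_sub, sum_sub_distrib]
  rw [sum_comm (f := fun i j => u i * A j i)]
  simp only [mul_comm]

section Discordance

variable {ι α β : Type*} [Fintype ι] [LinearOrder α] [LinearOrder β] {f : ι → α} {g : ι → β}

theorem sum_sq_sub_rankBelow (hf : Injective f) (hg : Injective g) :
    ∑ i, ((rankBelow f i : ℝ) - rankBelow g i) ^ 2
      = ∑ p ∈ univ.filter fun p : ι × ι => f p.2 < f p.1 ∧ g p.1 < g p.2,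
          (((rankBelow f p.1 : ℝ) - rankBelow f p.2) + (rankBelow g p.2 - rankBelow g p.1)) := by
  set u : ι → ℝ := fun i => (rankBelow f i : ℝ) - rankBelow g i with hu_def
  set A : ι → ι → ℝ := fun i j => if f j < f i ∧ g i < g j then 1 else 0
  have hu : ∀ i, u i = ∑ j, (A i j - A j i) := fun i => by
    have := congrArg (Nat.cast : ℕ → ℝ) (rankBelow_add_card_discordant hf hg i)
    push_cast at this
    simp only [A, hu_def, sum_sub_distrib, sum_boole]
    linarith
  calc ∑ i, u i ^ 2 = ∑ i, u i * ∑ j, (A i j - A j i) :=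
        sum_congr rfl fun i _ => by rw [← hu i, sq]
    _ = ∑ i, ∑ j, A i j * (u i - u j) := sum_mul_sum_sub_swap A u
    _ = _ := by
        rw [sum_filter, ← univ_product_univ, sum_product]
        refine sum_congr rfl fun i _ => sum_congr rfl fun j _ => ?_
        simp only [A, hu_def, ite_mul, one_mul, zero_mul]
        congr 1
        ring

theorem sum_sq_sub_le_of_rankBelow (hf : Injective f) (hg : Injective g) {r y : ι → ℝ}
    (hr : ∀ i, r i = rankBelow f i + 1) (hy : ∀ i, y i = rankBelow g i + 1)
    (w : ι → ι → ℝ) (hw_nonneg : ∀ i j, 0 ≤ w i j)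
    (hw_one : ∀ i j, f j < f i → g i < g j → 1 ≤ w i j) :
    ∑ i, (r i - y i) ^ 2
      ≤ 2 * ∑ p ∈ univ.filter fun p : ι × ι => y p.1 < y p.2,
          |r p.2 - r p.1| * (y p.2 - y p.1) * w p.1 p.2 := by
  obtain rfl : r = fun i => (rankBelow f i : ℝ) + 1 := funext hr
  obtain rfl : y = fun i => (rankBelow g i : ℝ) + 1 := funext hy
  simp only [add_sub_add_right_eq_sub]
  rw [sum_sq_sub_rankBelow hf hg, mul_sum]
  refine (sum_le_sum fun p hp => ?_).trans (sum_le_sum_of_subset_of_nonneg ?_ fun p hp _ => ?_)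
  · obtain ⟨hfp, hgp⟩ := (mem_filter.1 hp).2
    have hgap_f := cast_rankBelow_add_one_le hfp
    have hgap_g := cast_rankBelow_add_one_le hgp
    have hw := hw_one p.1 p.2 hfp hgp
    rw [abs_sub_comm, abs_of_nonneg (by linarith)]
    nlinarith [mul_nonneg (sub_nonneg.2 hgap_f) (sub_nonneg.2 hgap_g)]
  · intro p hp
    simpa using rankBelow_lt_rankBelow (mem_filter.1 hp).2.2
  · have hyp := (mem_filter.1 hp).2
    exact mul_nonneg two_pos.le <|
      mul_nonneg (mul_nonneg (abs_nonneg _) (by linarith)) (hw_nonneg _ _)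

end Discordance

theorem logb_two_one_add_exp_nonneg (x : ℝ) : 0 ≤ logb 2 (1 + exp x) :=
  logb_nonneg one_lt_two (le_add_of_nonneg_right (exp_pos x).le)

theorem one_le_logb_two_one_add_exp {x : ℝ} (hx : 0 ≤ x) : 1 ≤ logb 2 (1 + exp x) :=
  (le_logb_iff_rpow_le one_lt_two (by positivity)).2 <| by
    rw [rpow_one]
    linarith [one_le_exp hx]

theorem one_sub_spearman_eq {ι : Type*} [Fintype ι] {n : ℝ} (hn : n * (n ^ 2 - 1) ≠ 0)
    (r y : ι → ℝ) (hr : ∑ i, r i ^ 2 = n * (n + 1) * (2 * n + 1) / 6)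
    (hy : ∑ i, y i ^ 2 = n * (n + 1) * (2 * n + 1) / 6) :
    1 - 12 * ((∑ i, r i * y i) - n * ((n + 1) / 2) ^ 2) / (n * (n ^ 2 - 1))
      = 6 * (∑ i, (r i - y i) ^ 2) / (n * (n ^ 2 - 1)) := by
  have hsq : ∑ i, (r i - y i) ^ 2 = ∑ i, r i ^ 2 - 2 * ∑ i, r i * y i + ∑ i, y i ^ 2 := by
    simp only [sub_sq, sum_add_distrib, sum_sub_distrib, mul_sum, mul_assoc]
  rw [hsq, hr, hy, eq_div_iff hn, sub_mul, div_mul_cancel₀ _ hn]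
  ring

/-- Eq. 27 (main theoretical result): the LambdaRankIC loss `l_C` is an upper
bound on `1 − RankIC`. -/
theorem one_sub_rankIC_le_lambdaRankIC (n : ℕ) (hn : 2 ≤ n)
    (s : Fin n → ℝ) (hs : Function.Injective s) (y : Fin n → ℝ)
    (hy : ∃ σ : Equiv.Perm (Fin n), ∀ i, y i = ((σ i : ℕ) : ℝ) + 1)
    (σ : ℝ) (hσ : 0 < σ) :
    1 - 12 * ((∑ i, (1 + ((univ.filter fun j => j ≠ i ∧ s i < s j).card : ℝ)) * y i)
            - n * (((n : ℝ) + 1) / 2) ^ 2) / (n * ((n : ℝ) ^ 2 - 1))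
      ≤ 12 / (n * ((n : ℝ) ^ 2 - 1)) *
          ∑ p ∈ univ.filter fun p : Fin n × Fin n => y p.1 < y p.2,
            |(1 + ((univ.filter fun j => j ≠ p.2 ∧ s p.2 < s j).card : ℝ))
                - (1 + ((univ.filter fun j => j ≠ p.1 ∧ s p.1 < s j).card : ℝ))| *
              (y p.2 - y p.1) *
                Real.logb 2 (1 + Real.exp (-σ * (s p.1 - s p.2))) := by
  obtain ⟨e, he⟩ := hy
  have hD : (0 : ℝ) < n * ((n : ℝ) ^ 2 - 1) := by
    have : (2 : ℝ) ≤ n := by exact_mod_cast hn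
    nlinarith
  have hneg : Injective (-s) := neg_injective.comp hs
  have hr : ∀ i, 1 + ((univ.filter fun j => j ≠ i ∧ s i < s j).card : ℝ)
      = rankBelow (-s) i + 1 := fun i => by
    rw [add_comm, rankBelow]
    congr 3
    ext j
    simp only [mem_filter, mem_univ, true_and, Pi.neg_apply, neg_lt_neg_iff]
    exact and_iff_right_of_imp fun h hji => h.ne (congrArg s hji.symm)
  have hy : ∀ i, y i = rankBelow e i + 1 := fun i => by rw [he, rankBelow_equivFin]
  have hspearman := one_sub_spearman_eq hD.ne'
    (fun i => 1 + ((univ.filter fun j => j ≠ i ∧ s i < s j).card : ℝ)) y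
    (by simpa only [hr, Fintype.card_fin] using sum_rankBelow_add_one_sq hneg)
    (by simpa only [hy, Fintype.card_fin] using sum_rankBelow_add_one_sq e.injective)
  have hbound := sum_sq_sub_le_of_rankBelow hneg e.injective hr hy
    (fun i j => logb 2 (1 + exp (-σ * (s i - s j)))) (fun _ _ => logb_two_one_add_exp_nonneg _)
    fun i j hij _ => one_le_logb_two_one_add_exp <| mul_nonneg_of_nonpos_of_nonpos
      (neg_nonpos.2 hσ.le) (sub_nonpos.2 (neg_lt_neg_iff.1 hij).le)
  rw [hspearman, div_mul_eq_mul_div, div_le_div_iff_of_pos_right hD]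
  linarith
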